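/- For a set X ⊆ 2^ω the following are equivalent: (i) X is perfectly null; (ii) for every perfect set P ⊆ 2^ω, X ∩ P is P-measurable and P ∖ X ≠ ∅; (iii) there exists n ∈ ℕ such that for every binary sequence w of length n and every perfect set P ⊆ [w], the set X ∩ P is P-null. -/

import Mathlib

open MeasureTheory Set Pointwise

/-- The Cantor space `2^ω`, a compact topological group under coordinatewise
addition mod 2. -/
abbrev CS := ℕ → ZMod 2

/-- The basic clopen set `[w]` determined by a finite binary sequence `w`:
all `x ∈ 2^ω` extending `w`. -/
def cyl (w : List (ZMod 2)) : Set CS := {x | ∀ i, i < w.length → x i = w.getD i 0}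

/-- `w` is a branching node of `P`: both `[w⌢0] ∩ P` and `[w⌢1] ∩ P` are nonempty. -/
def Branch (P : Set CS) (w : List (ZMod 2)) : Prop :=
  (cyl (w ++ [0]) ∩ P).Nonempty ∧ (cyl (w ++ [1]) ∩ P).Nonempty

/-- A perfect subset of Cantor space: nonempty, closed, with no isolated points. -/
def PerfSet (P : Set CS) : Prop := Perfect P ∧ P.Nonempty

/-- `ν` is a canonical measure of the perfect set `P`: a Borel probability measure with
`ν P = 1` and `ν [w⌢0] = ν [w⌢1]` for every branching node `w` of `P`. -/
def IsCanonical (P : Set CS) (ν : Measure CS) : Prop :=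
  IsProbabilityMeasure ν ∧ ν P = 1 ∧
    ∀ w : List (ZMod 2), Branch P w → ν (cyl (w ++ [0])) = ν (cyl (w ++ [1]))

/-- `A` is `P`-null: the `μ_P`-outer measure of `A ∩ P` is `0`
(quantified over all canonical measures of `P`). -/
def PNull (P A : Set CS) : Prop := ∀ ν : Measure CS, IsCanonical P ν → ν (A ∩ P) = 0

/-- `A` is `P`-measurable: `A ∩ P` differs from a Borel set by a `P`-null set,
i.e. it is null-measurable with respect to the canonical measure of `P`. -/
def PMeasurable (P A : Set CS) : Prop :=
  ∀ ν : Measure CS, IsCanonical P ν → NullMeasurableSet (A ∩ P) ν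

/-- `X` is perfectly null: `P`-null for every perfect set `P`. -/
def PerfectlyNull (X : Set CS) : Prop := ∀ P, PerfSet P → PNull P X

/-- `μ` is the fair-coin (Lebesgue product) measure on `2^ω`:
a Borel probability measure with `μ [w] = 2^{-|w|}` for every finite binary sequence. -/
def IsFairCoin (μ : Measure CS) : Prop :=
  IsProbabilityMeasure μ ∧ ∀ w : List (ZMod 2), μ (cyl w) = (2 : ENNReal)⁻¹ ^ w.length

/-- The number of branching nodes of `P` that are proper initial segments of `v`. -/
noncomputable def brCount (P : Set CS) (v : List (ZMod 2)) : ℕ :=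
  Set.ncard {u : List (ZMod 2) | u <+: v ∧ u ≠ v ∧ Branch P u}

/-- A balanced perfect set: branching nodes of strictly smaller level
are strictly shorter. -/
def BalancedPerf (P : Set CS) : Prop :=
  PerfSet P ∧ ∀ v w : List (ZMod 2), Branch P v → Branch P w →
    brCount P v < brCount P w → v.length < w.length

/-- A uniformly perfect set: on each length, either all nodes meeting `P` branch,
or none does. -/
def UniformlyPerf (P : Set CS) : Prop :=
  PerfSet P ∧ ∀ n : ℕ,
    (∀ w : List (ZMod 2), w.length = n → (cyl w ∩ P).Nonempty → Branch P w) ∨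
    (∀ w : List (ZMod 2), w.length = n → ¬ Branch P w)

/-- A Silver perfect set: determined by a partial function `ℕ ⇀ 2`
whose domain has infinite complement. -/
def SilverPerf (P : Set CS) : Prop :=
  ∃ f : ℕ → Option (ZMod 2), {n | f n = none}.Infinite ∧
    P = {x | ∀ n b, f n = some b → x n = b}

/-- A Marczewski null (`s₀`) set. -/
def S0Set (X : Set CS) : Prop :=
  ∀ P, PerfSet P → ∃ Q, PerfSet Q ∧ Q ⊆ P ∧ Q ∩ X = ∅

/-- `S` is a Sierpiński set with respect to the measure `μ`: uncountable, with
countable intersection with every `μ`-null set. -/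
def Sierpinski (μ : Measure CS) (S : Set CS) : Prop :=
  ¬ S.Countable ∧ ∀ N : Set CS, μ N = 0 → (S ∩ N).Countable

/-- The interleaving homeomorphism `h : 2^ω × 2^ω → 2^ω`,
`h(x,y) = ⟨x 0, y 0, x 1, y 1, …⟩`. -/
def interleave (p : CS × CS) : CS := fun n => if n % 2 = 0 then p.1 (n / 2) else p.2 (n / 2)

/-- `X` is universally null: outer measure zero with respect to every finite diffused
Borel measure on `2^ω`. -/
def UniversallyNull (X : Set CS) : Prop :=
  ∀ μ : Measure CS, IsFiniteMeasure μ → (∀ x : CS, μ {x} = 0) → μ X = 0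

/-- `X` is strongly null: for every sequence of positive `ε n` there are sets `A n` of
diameter `< ε n` (with respect to the standard metric `d(x,y) = 2^{-min{n : x n ≠ y n}}`,
expressed combinatorially) covering `X`. -/
def StronglyNull (X : Set CS) : Prop :=
  ∀ ε : ℕ → ℝ, (∀ n, 0 < ε n) → ∃ A : ℕ → Set CS,
    (∀ n, ∃ N : ℕ, (2 : ℝ)⁻¹ ^ N < ε n ∧ ∀ x ∈ A n, ∀ y ∈ A n, ∀ i < N, x i = y i) ∧
    X ⊆ ⋃ n, A n

/-- `X` is perfectly null in the transitive sense: for every perfect `P` there is a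
`G_δ` set `G ⊇ X` with `(G + t) ∩ P` being `P`-null for every `t`. -/
def PNPrime (X : Set CS) : Prop :=
  ∀ P, PerfSet P → ∃ G : Set CS, IsGδ G ∧ X ⊆ G ∧
    ∀ t : CS, PNull P ((fun g => g + t) '' G)

/-!
(i) ⇒ (ii): null sets are measurable, and a perfectly null `X` cannot contain a perfect `P`:
every perfect `P` contains a perfect `Q` carrying a canonical measure, namely the image of Haar
measure on `2^ω` under the continuous injection that follows the bits of `x` through chosen
branching nodes of `P`.
(ii) ⇒ (i): canonical measures have no atoms, because the mass of a cylinder halves at each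
branching node; so if `X ∩ P` were measurable of positive measure, it would contain a closed set
of positive measure, and by Cantor–Bendixson a perfect subset of `X`.
(iii) ⇒ (i): cover `P` by the cylinders `[w]` with `|w| = n`; conditioning a canonical measure of
`P` on `[w]` gives a canonical measure of `P ∩ [w]`.
-/

open PiNat Function Filter Topology TopologicalSpace

def initSeg (x : CS) (n : ℕ) : List (ZMod 2) := List.ofFn fun i : Fin n => x i

@[simp] lemma initSeg_length (x : CS) (n : ℕ) : (initSeg x n).length = n := List.length_ofFn

lemma initSeg_succ (x : CS) (n : ℕ) : initSeg x (n + 1) = initSeg x n ++ [x n] := by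
  simp only [initSeg, List.ofFn_succ_last]
  rfl

lemma initSeg_prefix (x : CS) {m n : ℕ} (h : m ≤ n) : initSeg x m <+: initSeg x n := by
  rw [List.prefix_iff_eq_take]
  apply List.ext_getElem (by simp [h])
  intro i h1 h2
  simp [initSeg]

lemma cyl_initSeg (x : CS) (n : ℕ) : cyl (initSeg x n) = cylinder x n := by
  ext y
  simp +contextual [cyl, initSeg, List.getD_eq_getElem?_getD]

lemma cyl_eq_cylinder {w : List (ZMod 2)} {x : CS} (hx : x ∈ cyl w) :
    cyl w = cylinder x w.length := by
  ext y
  simp only [cyl, mem_ofPred_eq, mem_cylinder_iff]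
  exact forall₂_congr fun i hi => by rw [hx i hi]

lemma eq_initSeg_of_mem_cyl {w : List (ZMod 2)} {x : CS} (hx : x ∈ cyl w) :
    w = initSeg x w.length := by
  apply List.ext_getElem (by simp)
  intro i h1 h2
  simp [initSeg, hx i h1, List.getElem?_eq_getElem h1]

lemma mem_cyl_append {w : List (ZMod 2)} {b : ZMod 2} {x : CS} :
    x ∈ cyl (w ++ [b]) ↔ x ∈ cyl w ∧ x w.length = b := by
  simp only [cyl, mem_ofPred_eq, List.length_append, List.length_singleton,
    Nat.lt_succ_iff_lt_or_eq, or_imp, forall_and, forall_eq]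
  refine and_congr (forall₂_congr fun i hi => ?_) ?_
  · simp [List.getElem?_append_left hi, List.getElem?_eq_getElem hi]
  · simp

lemma cyl_anti {u v : List (ZMod 2)} (h : u <+: v) : cyl v ⊆ cyl u := by
  intro x hx i hi
  rw [hx i (hi.trans_le h.length_le), List.getD_eq_getElem _ _ hi,
    List.getD_eq_getElem _ _ (hi.trans_le h.length_le), h.getElem hi]

lemma cyl_subset_cyl {u w : List (ZMod 2)} (h : (cyl u ∩ cyl w).Nonempty)
    (hl : w.length ≤ u.length) : cyl u ⊆ cyl w := by
  obtain ⟨z, hu, hw⟩ := h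
  rw [cyl_eq_cylinder hu, cyl_eq_cylinder hw]
  exact cylinder_anti z hl

lemma isClopen_cyl (w : List (ZMod 2)) : IsClopen (cyl w) := by
  have hx : (fun i => w.getD i 0) ∈ cyl w := fun _ _ => rfl
  rw [cyl_eq_cylinder hx, cylinder_eq_pi]
  exact ⟨isClosed_set_pi fun _ _ => isClosed_discrete _,
    isOpen_set_pi (Finset.range _).finite_toSet fun _ _ => isOpen_discrete _⟩

lemma measurableSet_cyl (w : List (ZMod 2)) : MeasurableSet (cyl w) :=
  (isClopen_cyl w).isOpen.measurableSet

lemma firstDiff_eq {E : ℕ → Type*} {x y : ∀ n, E n} {n : ℕ} (h : y ∈ cylinder x n)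
    (hn : x n ≠ y n) : firstDiff x y = n := by
  have hxy : x ≠ y := fun h' => hn (h' ▸ rfl)
  refine le_antisymm (not_lt.1 fun hlt => hn (apply_eq_of_lt_firstDiff hlt)) ?_
  rw [firstDiff_comm]
  exact (mem_cylinder_iff_le_firstDiff hxy.symm n).1 h

lemma exists_cylinder_subset {x : CS} {U : Set CS} (hU : U ∈ 𝓝 x) : ∃ n, cylinder x n ⊆ U := by
  obtain ⟨_, ⟨y, n, rfl⟩, hx, hsub⟩ := (isTopologicalBasis_cylinders _).mem_nhds_iff.1 hU
  exact ⟨n, mem_cylinder_iff_eq.1 hx ▸ hsub⟩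

lemma cylinder_mem_nhds (x : CS) (n : ℕ) : cylinder x n ∈ 𝓝 x :=
  (isOpen_cylinder _ x n).mem_nhds (self_mem_cylinder x n)

lemma mem_of_forall_cylinder_inter_nonempty {P : Set CS} (hP : IsClosed P) {x : CS}
    (h : ∀ n, (cylinder x n ∩ P).Nonempty) : x ∈ P :=
  hP.closure_subset <| mem_closure_iff_nhds.2 fun _ hU =>
    let ⟨n, hn⟩ := exists_cylinder_subset hU
    (h n).mono (inter_subset_inter_left _ hn)

instance : PerfectSpace CS := by
  refine ⟨preperfect_iff_nhds.2 fun x _ U hU => ?_⟩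
  obtain ⟨n, hn⟩ := exists_cylinder_subset hU
  refine ⟨update x n (x n + 1), ⟨hn (update_mem_cylinder x n _), trivial⟩, fun h => ?_⟩
  have : x n + 1 = x n := by simpa using congr_fun h n
  simp at this

lemma preperfect_range {α β : Type*} [TopologicalSpace α] [PerfectSpace α] [TopologicalSpace β]
    {f : α → β} (hf : Continuous f) (hinj : Injective f) : Preperfect (range f) := by
  rintro _ ⟨x, rfl⟩
  have : Tendsto f (𝓝[≠] x) (𝓝[≠] (f x) ⊓ 𝓟 (range f)) :=
    le_inf (hf.continuousWithinAt.tendsto_nhdsWithin fun _ hy => hinj.ne hy)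
      (tendsto_principal.2 (Eventually.of_forall mem_range_self))
  exact this.neBot

lemma continuous_of_cylinder {f : CS → CS}
    (hf : ∀ k, ∃ n, ∀ x, ∀ y ∈ cylinder x n, f y k = f x k) : Continuous f := by
  refine continuous_pi fun k => IsLocallyConstant.continuous ?_
  obtain ⟨n, hn⟩ := hf k
  exact (IsLocallyConstant.iff_eventually_eq _).2 fun x =>
    Filter.mem_of_superset (cylinder_mem_nhds x n) fun y hy => hn x y hy

lemma measure_cylinder_eq (μ : Measure CS) [μ.IsAddLeftInvariant] (x y : CS) (n : ℕ) :
    μ (cylinder x n) = μ (cylinder y n) := by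
  have : (fun z => (x - y) + z) ⁻¹' cylinder x n = cylinder y n := by
    ext z
    simp only [mem_preimage, mem_cylinder_iff, Pi.add_apply, Pi.sub_apply]
    exact forall₂_congr fun i _ => by constructor <;> intro h <;> linear_combination h
  rw [← this, measure_preimage_add]

lemma cylinder_succ_update (x : CS) (k : ℕ) (b : ZMod 2) :
    cylinder (update x k b) (k + 1) = cylinder x k ∩ {z | z k = b} := by
  ext z
  simp only [mem_cylinder_iff, Nat.lt_succ_iff_lt_or_eq, or_imp, forall_and, forall_eq,
    update_self, mem_inter_iff, mem_ofPred_eq]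
  exact and_congr_left' (forall₂_congr fun i hi => by rw [update_of_ne hi.ne])

noncomputable def cantorHaar : Measure CS := Measure.addHaarMeasure ⊤

instance : IsProbabilityMeasure cantorHaar :=
  ⟨by simpa [cantorHaar] using Measure.addHaarMeasure_self (K₀ := (⊤ : PositiveCompacts CS))⟩

instance : cantorHaar.IsAddLeftInvariant := by
  unfold cantorHaar
  infer_instance

section

variable {P Q X : Set CS} {ν : Measure CS}

lemma branch_of_ne {w : List (ZMod 2)} {a b : ZMod 2} (hab : a ≠ b)
    (ha : (cyl (w ++ [a]) ∩ P).Nonempty) (hb : (cyl (w ++ [b]) ∩ P).Nonempty) : Branch P w := by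
  fin_cases a <;> fin_cases b
  all_goals first | exact absurd rfl hab | exact ⟨ha, hb⟩ | exact ⟨hb, ha⟩

lemma Branch.inter_nonempty {w : List (ZMod 2)} (h : Branch P w) (b : ZMod 2) :
    (cyl (w ++ [b]) ∩ P).Nonempty := by
  fin_cases b
  exacts [h.1, h.2]

lemma Branch.mono {w : List (ZMod 2)} (h : Branch Q w) (hQP : Q ⊆ P) : Branch P w :=
  ⟨h.1.mono (inter_subset_inter_right _ hQP), h.2.mono (inter_subset_inter_right _ hQP)⟩

lemma Branch.cyl_subset {u w : List (ZMod 2)} (h : Branch Q u) (hQ : Q ⊆ cyl w) :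
    cyl u ⊆ cyl w := by
  obtain ⟨⟨z₀, h₀, hz₀⟩, ⟨z₁, h₁, hz₁⟩⟩ := h
  rw [mem_cyl_append] at h₀ h₁
  refine cyl_subset_cyl ⟨z₀, h₀.1, hQ hz₀⟩ (not_lt.1 fun hlt => ?_)
  have : z₀ u.length = z₁ u.length := (hQ hz₀ _ hlt).trans (hQ hz₁ _ hlt).symm
  rw [h₀.2, h₁.2] at this
  exact absurd this (by decide)

lemma Perfect.exists_branch_initSeg (hP : Perfect P) {x : CS} (hx : x ∈ P) (n : ℕ) :
    ∃ m, n ≤ m ∧ Branch P (initSeg x m) := by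
  obtain ⟨y, ⟨hyn, hyP⟩, hyx⟩ := preperfect_iff_nhds.1 hP.acc x hx _ (cylinder_mem_nhds x n)
  refine ⟨firstDiff y x, (mem_cylinder_iff_le_firstDiff hyx n).1 hyn,
    branch_of_ne (apply_firstDiff_ne hyx) ⟨y, mem_cyl_append.2 ⟨?_, by simp⟩, hyP⟩
      ⟨x, mem_cyl_append.2 ⟨?_, by simp⟩, hx⟩⟩
  · rw [cyl_initSeg, ← mem_cylinder_iff_eq.1 (mem_cylinder_firstDiff y x)]
    exact self_mem_cylinder y _
  · exact cyl_initSeg x _ ▸ self_mem_cylinder x _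

lemma Perfect.exists_branch_extension (hP : Perfect P) {u : List (ZMod 2)}
    (hu : (cyl u ∩ P).Nonempty) : ∃ v, u <+: v ∧ Branch P v := by
  obtain ⟨x, hxu, hxP⟩ := hu
  obtain ⟨m, hm, hbr⟩ := hP.exists_branch_initSeg hxP u.length
  refine ⟨initSeg x m, ?_, hbr⟩
  rw [eq_initSeg_of_mem_cyl hxu]
  exact initSeg_prefix x hm

lemma Perfect.inter_cyl (hP : Perfect P) (w : List (ZMod 2)) : Perfect (P ∩ cyl w) :=
  ⟨hP.closed.inter (isClopen_cyl w).isClosed, by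
    simpa only [inter_comm] using hP.acc.open_inter (isClopen_cyl w).isOpen⟩

lemma IsCanonical.measure_compl (hP : IsClosed P) (hν : IsCanonical P ν) : ν Pᶜ = 0 := by
  have := hν.1
  rw [MeasureTheory.measure_compl hP.measurableSet (measure_ne_top ν P), hν.2.1, measure_univ,
    tsub_self]

lemma IsCanonical.measure_cyl_append_le (hν : IsCanonical P ν) {w : List (ZMod 2)}
    (hw : Branch P w) (b : ZMod 2) : ν (cyl (w ++ [b])) ≤ 2⁻¹ * ν (cyl w) := by
  have hb : ν (cyl (w ++ [b])) = ν (cyl (w ++ [0])) := by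
    fin_cases b
    · rfl
    · exact (hν.2.2 w hw).symm
  have hdisj : Disjoint (cyl (w ++ [0])) (cyl (w ++ [1])) := disjoint_left.2 fun z h₀ h₁ =>
    absurd ((mem_cyl_append.1 h₀).2.symm.trans (mem_cyl_append.1 h₁).2) (by decide)
  calc ν (cyl (w ++ [b])) = 2⁻¹ * (ν (cyl (w ++ [0])) + ν (cyl (w ++ [1]))) := by
        rw [hb, ← hν.2.2 w hw, ← two_mul, ← mul_assoc, ENNReal.inv_mul_cancel two_ne_zero
          ENNReal.ofNat_ne_top, one_mul]
    _ ≤ 2⁻¹ * ν (cyl w) := by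
        rw [← measure_union hdisj (measurableSet_cyl _)]
        exact mul_le_mul_right (measure_mono (union_subset (cyl_anti (List.prefix_append _ _))
          (cyl_anti (List.prefix_append _ _)))) _

lemma IsCanonical.measure_singleton (hP : Perfect P) (hν : IsCanonical P ν) (x : CS) :
    ν {x} = 0 := by
  by_cases hx : x ∈ P
  swap
  · exact measure_mono_null (singleton_subset_iff.2 (show x ∈ Pᶜ from hx))
      (hν.measure_compl hP.closed)
  have hsmall : ∀ k : ℕ, ∃ n, ν (cylinder x n) ≤ 2⁻¹ ^ k := by
    intro k
    induction k with
    | zero => exact ⟨0, by have := hν.1; simp⟩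
    | succ k ih =>
      obtain ⟨n, hn⟩ := ih
      obtain ⟨m, hnm, hbr⟩ := hP.exists_branch_initSeg hx n
      refine ⟨m + 1, ?_⟩
      calc ν (cylinder x (m + 1)) ≤ 2⁻¹ * ν (cylinder x m) := by
            rw [← cyl_initSeg, ← cyl_initSeg, initSeg_succ]
            exact hν.measure_cyl_append_le hbr _
        _ ≤ 2⁻¹ * 2⁻¹ ^ k := by gcongr; exact (measure_mono (cylinder_anti x hnm)).trans hn
        _ = 2⁻¹ ^ (k + 1) := (pow_succ' _ _).symm
  by_contra h
  obtain ⟨k, hk⟩ := ENNReal.exists_inv_two_pow_lt h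
  obtain ⟨n, hn⟩ := hsmall k
  exact hk.not_ge ((measure_mono (singleton_subset_iff.2 (self_mem_cylinder x n))).trans hn)

lemma IsCanonical.nullSingletonClass (hP : Perfect P) (hν : IsCanonical P ν) :
    NullSingletonClass ν :=
  ⟨hν.measure_singleton hP⟩

open ProbabilityTheory in
lemma IsCanonical.cond_cyl (hP : IsClosed P) (hν : IsCanonical P ν) {w : List (ZMod 2)}
    (hw : ν (cyl w) ≠ 0) : IsCanonical (P ∩ cyl w) ν[|cyl w] := by
  have := hν.1
  have hcompl : ν[|cyl w] Pᶜ = 0 := cond_absolutelyContinuous (hν.measure_compl hP)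
  refine ⟨cond_isProbabilityMeasure hw, ?_, fun u hu => ?_⟩
  · rw [inter_comm, measure_inter_conull hcompl, cond_apply_self hw (measure_ne_top ν _)]
  · have hsub : ∀ b, cyl (u ++ [b]) ⊆ cyl w := fun b =>
      (cyl_anti (List.prefix_append _ _)).trans (hu.cyl_subset inter_subset_right)
    rw [cond_apply (measurableSet_cyl w), cond_apply (measurableSet_cyl w),
      inter_eq_self_of_subset_right (hsub 0), inter_eq_self_of_subset_right (hsub 1),
      hν.2.2 u (hu.mono inter_subset_left)]

open Classical in
noncomputable def nextBranch (P : Set CS) (u : List (ZMod 2)) : List (ZMod 2) :=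
  if h : ∃ v, u <+: v ∧ Branch P v then h.choose else u

lemma nextBranch_spec (hP : Perfect P) {u : List (ZMod 2)} (hu : (cyl u ∩ P).Nonempty) :
    u <+: nextBranch P u ∧ Branch P (nextBranch P u) := by
  have h := hP.exists_branch_extension hu
  rw [nextBranch, dif_pos h]
  exact h.choose_spec

/- `branchNode P x (n + 1)` is a chosen branching node of `P` above `branchNode P x n`, followed
by the bit `x n`; `branchEmb P x` is the limit of these nodes. -/
noncomputable def branchNode (P : Set CS) (x : CS) : ℕ → List (ZMod 2)
  | 0 => []
  | n + 1 => nextBranch P (branchNode P x n) ++ [x n]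

noncomputable def splitLength (P : Set CS) (x : CS) (k : ℕ) : ℕ :=
  (nextBranch P (branchNode P x k)).length

noncomputable def branchEmb (P : Set CS) (x : CS) : CS :=
  fun k => (branchNode P x (k + 1)).getD k 0

lemma branchNode_inter_nonempty (hP : PerfSet P) (x : CS) (n : ℕ) :
    (cyl (branchNode P x n) ∩ P).Nonempty := by
  induction n with
  | zero => simpa [branchNode, cyl] using hP.2
  | succ n ih => exact (nextBranch_spec hP.1 ih).2.inter_nonempty (x n)

lemma branchNode_mono (hP : PerfSet P) (x : CS) {m n : ℕ} (h : m ≤ n) :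
    branchNode P x m <+: branchNode P x n := by
  induction n, h using Nat.le_induction with
  | base => exact List.prefix_refl _
  | succ n _ ih =>
    exact ih.trans ((nextBranch_spec hP.1 (branchNode_inter_nonempty hP x n)).1.trans
      (List.prefix_append _ _))

lemma length_branchNode_succ (x : CS) (k : ℕ) :
    (branchNode P x (k + 1)).length = splitLength P x k + 1 := by
  simp [branchNode, splitLength]

lemma splitLength_strictMono (hP : PerfSet P) (x : CS) : StrictMono (splitLength P x) :=
  strictMono_nat_of_lt_succ fun k => by
    have := (nextBranch_spec hP.1 (branchNode_inter_nonempty hP x (k + 1))).1.length_le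
    rwa [length_branchNode_succ] at this

lemma le_length_branchNode (hP : PerfSet P) (x : CS) (n : ℕ) :
    n ≤ (branchNode P x n).length := by
  cases n with
  | zero => exact Nat.zero_le _
  | succ k =>
    rw [length_branchNode_succ]
    exact Nat.succ_le_succ ((splitLength_strictMono hP x).id_le k)

lemma branchNode_congr {x y : CS} {n : ℕ} (h : y ∈ cylinder x n) :
    branchNode P y n = branchNode P x n := by
  induction n with
  | zero => rfl
  | succ n ih => simp only [branchNode, ih (cylinder_anti x n.le_succ h), h n n.lt_succ_self]

lemma splitLength_congr {x y : CS} {k : ℕ} (h : y ∈ cylinder x k) :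
    splitLength P y k = splitLength P x k := by
  rw [splitLength, splitLength, branchNode_congr h]

lemma branchEmb_mem_cyl (hP : PerfSet P) (x : CS) (n : ℕ) :
    branchEmb P x ∈ cyl (branchNode P x n) := by
  intro k hk
  have hN : (fun i => (branchNode P x (max n (k + 1))).getD i 0) ∈
      cyl (branchNode P x (max n (k + 1))) := fun _ _ => rfl
  have h₁ := cyl_anti (branchNode_mono hP x (le_max_left n (k + 1))) hN k hk
  have h₂ := cyl_anti (branchNode_mono hP x (le_max_right n (k + 1))) hN k
    (k.lt_succ_self.trans_le (le_length_branchNode hP x _))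
  exact h₂.symm.trans h₁

lemma branchEmb_mem_cyl_nextBranch (hP : PerfSet P) (x : CS) (k : ℕ) :
    branchEmb P x ∈ cyl (nextBranch P (branchNode P x k)) ∧
      branchEmb P x (splitLength P x k) = x k :=
  mem_cyl_append.1 (branchEmb_mem_cyl hP x (k + 1))

lemma firstDiff_branchEmb (hP : PerfSet P) {x y : CS} (hxy : x ≠ y) :
    firstDiff (branchEmb P x) (branchEmb P y) = splitLength P x (firstDiff x y) := by
  have hyx : y ∈ cylinder x (firstDiff x y) := firstDiff_comm x y ▸ mem_cylinder_firstDiff y x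
  obtain ⟨hx, hxk⟩ := branchEmb_mem_cyl_nextBranch hP x (firstDiff x y)
  obtain ⟨hy, hyk⟩ := branchEmb_mem_cyl_nextBranch hP y (firstDiff x y)
  rw [branchNode_congr hyx, cyl_eq_cylinder hx] at hy
  rw [splitLength_congr hyx] at hyk
  exact firstDiff_eq hy (by rw [hxk, hyk]; exact apply_firstDiff_ne hxy)

lemma branchEmb_injective (hP : PerfSet P) : Injective (branchEmb P) := by
  intro x y h
  by_contra hxy
  have hyx : y ∈ cylinder x (firstDiff x y) := firstDiff_comm x y ▸ mem_cylinder_firstDiff y x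
  have hxk := (branchEmb_mem_cyl_nextBranch hP x (firstDiff x y)).2
  have hyk := (branchEmb_mem_cyl_nextBranch hP y (firstDiff x y)).2
  rw [splitLength_congr hyx, ← h, hxk] at hyk
  exact apply_firstDiff_ne hxy hyk

lemma branchEmb_mem_cylinder_iff (hP : PerfSet P) (x y : CS) (k : ℕ) :
    branchEmb P y ∈ cylinder (branchEmb P x) (splitLength P x k) ↔ y ∈ cylinder x k := by
  rcases eq_or_ne y x with rfl | hyx
  · simp only [self_mem_cylinder]
  rw [mem_cylinder_iff_le_firstDiff ((branchEmb_injective hP).ne hyx),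
    mem_cylinder_iff_le_firstDiff hyx, firstDiff_branchEmb hP hyx,
    splitLength_congr (mem_cylinder_firstDiff y x)]
  exact (splitLength_strictMono hP x).le_iff_le

lemma continuous_branchEmb : Continuous (branchEmb P) :=
  continuous_of_cylinder fun k =>
    ⟨k + 1, fun x y h => by simp only [branchEmb, branchNode_congr h]⟩

lemma branchEmb_mem (hP : PerfSet P) (x : CS) : branchEmb P x ∈ P := by
  refine mem_of_forall_cylinder_inter_nonempty hP.1.closed fun n => ?_
  obtain ⟨z, hz, hzP⟩ := branchNode_inter_nonempty hP x n
  rw [cyl_eq_cylinder (branchEmb_mem_cyl hP x n)] at hz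
  exact ⟨z, cylinder_anti _ (le_length_branchNode hP x n) hz, hzP⟩

lemma preimage_branchEmb_cyl_append (hP : PerfSet P) {u : List (ZMod 2)} {x y : CS}
    (h₀ : branchEmb P x ∈ cyl (u ++ [0])) (h₁ : branchEmb P y ∈ cyl (u ++ [1])) (b : ZMod 2) :
    branchEmb P ⁻¹' cyl (u ++ [b]) =
      cylinder x (firstDiff x y) ∩ {z | z (firstDiff x y) = b} := by
  rw [mem_cyl_append] at h₀ h₁
  have hxy : x ≠ y := by
    rintro rfl
    exact absurd (h₀.2.symm.trans h₁.2) (by decide)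
  have hu : u.length = splitLength P x (firstDiff x y) := by
    rw [← firstDiff_branchEmb hP hxy]
    refine (firstDiff_eq (cyl_eq_cylinder h₀.1 ▸ h₁.1) ?_).symm
    rw [h₀.2, h₁.2]
    decide
  ext z
  rw [mem_preimage, mem_cyl_append, cyl_eq_cylinder h₀.1, hu, branchEmb_mem_cylinder_iff hP]
  refine and_congr_right fun hz => ?_
  rw [← splitLength_congr hz, (branchEmb_mem_cyl_nextBranch hP z _).2]
  rfl

theorem PerfSet.exists_subset_isCanonical (hP : PerfSet P) :
    ∃ Q ν, PerfSet Q ∧ Q ⊆ P ∧ IsCanonical Q ν := by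
  have hclosed : IsClosed (range (branchEmb P)) :=
    (isCompact_range continuous_branchEmb).isClosed
  refine ⟨range (branchEmb P), cantorHaar.map (branchEmb P),
    ⟨⟨hclosed, preperfect_range continuous_branchEmb (branchEmb_injective hP)⟩, range_nonempty _⟩,
    range_subset_iff.2 (branchEmb_mem hP),
    Measure.isProbabilityMeasure_map continuous_branchEmb.aemeasurable, ?_, ?_⟩
  · rw [Measure.map_apply continuous_branchEmb.measurable hclosed.measurableSet, preimage_range,
      measure_univ]
  · rintro u ⟨⟨_, h₀, x, rfl⟩, ⟨_, h₁, y, rfl⟩⟩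
    rw [Measure.map_apply continuous_branchEmb.measurable (measurableSet_cyl _),
      Measure.map_apply continuous_branchEmb.measurable (measurableSet_cyl _),
      preimage_branchEmb_cyl_append hP h₀ h₁, preimage_branchEmb_cyl_append hP h₀ h₁,
      ← cylinder_succ_update, ← cylinder_succ_update]
    exact measure_cylinder_eq _ _ _ _

lemma PNull.pmeasurable (h : PNull P X) : PMeasurable P X :=
  fun ν hν => NullMeasurableSet.of_null (h ν hν)

lemma PerfectlyNull.diff_nonempty (hX : PerfectlyNull X) (hP : PerfSet P) :
    (P \ X).Nonempty := by
  obtain ⟨Q, ν, hQ, hQP, hν⟩ := hP.exists_subset_isCanonical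
  rw [nonempty_iff_ne_empty, Ne, sdiff_eq_empty]
  intro hPX
  have h := hX Q hQ ν hν
  rw [inter_eq_self_of_subset_right (hQP.trans hPX), hν.2.1] at h
  exact one_ne_zero h

lemma pnull_of_pmeasurable (hP : Perfect P) (hX : PMeasurable P X)
    (hdiff : ∀ Q, PerfSet Q → Q ⊆ P → (Q \ X).Nonempty) : PNull P X := by
  intro ν hν
  have := hν.1
  have := hν.nullSingletonClass hP
  by_contra h
  obtain ⟨B, hBX, hB, hBeq⟩ := (hX ν hν).exists_measurable_subset_ae_eq
  obtain ⟨F, hFB, hF, hνF⟩ := hB.exists_lt_isClosed_of_ne_top (measure_ne_top ν B)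
    (pos_iff_ne_zero.2 (measure_congr hBeq ▸ h))
  obtain ⟨V, D, hV, hD, rfl⟩ := exists_countable_union_perfect_of_isClosed hF
  have hDne : D.Nonempty := by
    rw [nonempty_iff_ne_empty]
    rintro rfl
    rw [union_empty, hV.measure_zero] at hνF
    exact hνF.false
  have hDX : D ⊆ X ∩ P := subset_union_right.trans (hFB.trans hBX)
  obtain ⟨z, hzD, hzX⟩ := hdiff D ⟨hD, hDne⟩ (hDX.trans inter_subset_right)
  exact hzX (hDX hzD).1

open ProbabilityTheory in
lemma perfectlyNull_of_forall_cyl {n : ℕ}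
    (h : ∀ w : List (ZMod 2), w.length = n → ∀ P, PerfSet P → P ⊆ cyl w → PNull P X) :
    PerfectlyNull X := by
  intro P hP ν hν
  have := hν.1
  have hcover : X ∩ P ⊆ ⋃ w : {w : List (ZMod 2) // w.length = n}, X ∩ P ∩ cyl w :=
    fun z hz => mem_iUnion.2 ⟨⟨initSeg z n, initSeg_length z n⟩, hz,
      (cyl_initSeg z n).symm ▸ self_mem_cylinder z n⟩
  refine measure_mono_null hcover (measure_iUnion_null fun ⟨w, hw⟩ => ?_)
  by_cases hνw : ν (cyl w) = 0
  · exact measure_mono_null inter_subset_right hνw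
  have hPw : (P ∩ cyl w).Nonempty := by
    rw [nonempty_iff_ne_empty]
    intro hem
    rw [← measure_inter_conull (hν.measure_compl hP.1.closed), inter_comm, hem] at hνw
    exact hνw measure_empty
  have h0 := h w hw _ ⟨hP.1.inter_cyl w, hPw⟩ inter_subset_right _ (hν.cond_cyl hP.1.closed hνw)
  rw [cond_apply (measurableSet_cyl w), mul_eq_zero, ENNReal.inv_eq_zero] at h0
  refine measure_mono_null (fun z hz => ?_) (h0.resolve_left (measure_ne_top ν _))
  exact ⟨hz.2, hz.1.1, hz.1.2, hz.2⟩

end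

/-- `X` is perfectly null iff for every perfect `P`, `X ∩ P` is `P`-measurable
and `P \ X ≠ ∅`, iff there exists `n` such that for every binary sequence `w` of length `n`
and every perfect `P ⊆ [w]`, the set `X ∩ P` is `P`-null. -/
theorem stmt_3 (X : Set CS) :
    (PerfectlyNull X ↔ ∀ P, PerfSet P → PMeasurable P X ∧ (P \ X).Nonempty) ∧
    (PerfectlyNull X ↔ ∃ n : ℕ, ∀ w : List (ZMod 2), w.length = n →
      ∀ P, PerfSet P → P ⊆ cyl w → PNull P X) :=
  ⟨⟨fun hX P hP => ⟨(hX P hP).pmeasurable, hX.diff_nonempty hP⟩,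
    fun h P hP => pnull_of_pmeasurable hP.1 (h P hP).1 fun Q hQ _ => (h Q hQ).2⟩,
   ⟨fun hX => ⟨0, fun _ _ P hP _ => hX P hP⟩, fun ⟨_, h⟩ => perfectlyNull_of_forall_cyl h⟩⟩
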